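/- Adopt the FAVOR+S binding setup: fix integers D, M, N ≥ 1, a fixed channel (u, n) ∈ {1,…,M}×{1,…,N} and positions i, j; for each channel pair (m, w) ∈ {1,…,M}×{1,…,N} let k̄_j^{(m,w)} ∈ ℝ^D and q̄_i^{(m,w)} ∈ ℝ^D be fixed vectors and let a^{(m,w)} ∈ {−1,+1}^D be mutually independent random vectors with i.i.d. Rademacher entries; define k_j^{(m,w)} = k̄_j^{(m,w)} ⊙ a^{(m,w)} and q_i^{(m,w)} = q̄_i^{(m,w)} ⊙ a^{(m,w)}. Let α > 0, assume ⟨k̄_j^{(u,n)}, q̄_i^{(u,n)}⟩ ≠ 0, and let P = ℙ{ ⟨Σ_{w=1}^N k_j^{(u,w)}, Σ_{t=1}^M q_i^{(t,n)}⟩ ∉ [1−α, 1+α]·⟨k̄_j^{(u,n)}, q̄_i^{(u,n)}⟩ }. For (t, w) with (u, w) ≠ (t, n) set Ξ_{(u,w)}^{(t,n)} = α²·⟨k̄_j^{(u,n)}, q̄_i^{(u,n)}⟩² / Σ_{p=1}^D (k̄_j^{(u,w)})_p²·(q̄_i^{(t,n)})_p². Then P ≤ Σ_{t=1}^M √( Σ_{w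 ∈ {1,…,N}, (u,w) ≠ (t,n)} 1/Ξ_{(u,w)}^{(t,n)} ). -/

import Mathlib

open MeasureTheory ProbabilityTheory
open scoped ENNReal NNReal

/-- The Rademacher distribution on `ℝ`: uniform on `{-1, +1}`. -/
noncomputable def rademacherMeasure : Measure ℝ :=
  (2 : ℝ≥0∞)⁻¹ • Measure.dirac (1 : ℝ) + (2 : ℝ≥0∞)⁻¹ • Measure.dirac (-1 : ℝ)

/-- `Ξ = α²·c² / ∑_p (k̄)_p²·(q̄)_p²` where `c` is the intended signal. -/
noncomputable def Xi (D : ℕ) (α c : ℝ) (kb qb : Fin D → ℝ) : ℝ :=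
  α ^ 2 * c ^ 2 / ∑ p, (kb p) ^ 2 * (qb p) ^ 2

section Helpers
variable {Ω : Type*} [MeasurableSpace Ω] {μ : Measure Ω} [IsProbabilityMeasure μ]

lemma my_integrable_of_abs_le {f : Ω → ℝ} {C : ℝ} (hm : Measurable f)
    (hb : ∀ ω, |f ω| ≤ C) : Integrable f μ :=
  (integrable_const C).mono' hm.aestronglyMeasurable
    (ae_of_all _ fun ω => by simpa [Real.norm_eq_abs] using hb ω)

lemma my_abs_integral_le_sqrt {f : Ω → ℝ} {C : ℝ} (hm : Measurable f)
    (hb : ∀ ω, |f ω| ≤ C) :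
    ∫ ω, |f ω| ∂μ ≤ Real.sqrt (∫ ω, (f ω) ^ 2 ∂μ) := by
  have hmem : MemLp (fun ω => |f ω|) 2 μ :=
    (memLp_top_of_bound hm.abs.aestronglyMeasurable C
      (ae_of_all _ fun ω => by
        simpa [Real.norm_eq_abs, abs_abs] using hb ω)).mono_exponent le_top
  have hvar := variance_nonneg (fun ω => |f ω|) μ
  rw [variance_eq_sub hmem] at hvar
  have h1 : (∫ ω, |f ω| ∂μ) ^ 2 ≤ ∫ ω, (f ω) ^ 2 ∂μ := by
    have h2 : (∫ ω, (|f ·|) ω ^ 2 ∂μ) = ∫ ω, (f ω) ^ 2 ∂μ := by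
      simp [sq_abs]
    simp only [Pi.pow_apply] at hvar
    nlinarith [hvar, h2]
  calc ∫ ω, |f ω| ∂μ = Real.sqrt ((∫ ω, |f ω| ∂μ) ^ 2) :=
        (Real.sqrt_sq (integral_nonneg fun ω => abs_nonneg _)).symm
    _ ≤ Real.sqrt (∫ ω, (f ω) ^ 2 ∂μ) := Real.sqrt_le_sqrt h1

lemma my_int_dirac (x : ℝ) : Integrable (fun y : ℝ => y) (Measure.dirac x) :=
  ⟨aestronglyMeasurable_id, by simp [HasFiniteIntegral, lintegral_dirac]⟩

lemma my_rademacher_mean (f : Ω → ℝ) (hf : Measurable f)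
    (hd : Measure.map f μ = rademacherMeasure) : ∫ ω, f ω ∂μ = 0 := by
  have h : ∫ ω, f ω ∂μ = ∫ x, x ∂(Measure.map f μ) :=
    (integral_map hf.aemeasurable aestronglyMeasurable_id).symm
  rw [h, hd, rademacherMeasure]
  rw [integral_add_measure]
  · simp [integral_smul_measure]
  · exact (my_int_dirac 1).smul_measure (by simp)
  · exact (my_int_dirac (-1)).smul_measure (by simp)

end Helpers

/-- **FAVOR+S inter-channel noise, second Khintchine/Markov bound.**
`P ≤ ∑_{t=1}^M √( ∑_{w, (u,w)≠(t,n)} 1/Ξ_{(u,w)}^{(t,n)} )`. -/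
theorem stmt_9 {Ω : Type*} [MeasurableSpace Ω] (μ : Measure Ω) [IsProbabilityMeasure μ]
    (D M N : ℕ) (hD : 1 ≤ D) (hM : 1 ≤ M) (hN : 1 ≤ N)
    (u : Fin M) (n : Fin N)
    (kbar qbar : Fin M × Fin N → Fin D → ℝ)
    (a : Fin M × Fin N → Ω → Fin D → ℝ)
    (haval : ∀ c ω d, a c ω d = 1 ∨ a c ω d = -1)
    (hameas : ∀ c d, Measurable fun ω => a c ω d)
    (hindep : iIndepFun
      (fun (p : (Fin M × Fin N) × Fin D) ω => a p.1 ω p.2) μ)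
    (hadist : ∀ c d, Measure.map (fun ω => a c ω d) μ = rademacherMeasure)
    (α : ℝ) (hα : 0 < α)
    (hsig : (∑ d, kbar (u, n) d * qbar (u, n) d) ≠ 0) :
    μ {ω | (∑ d, (∑ w, kbar (u, w) d * a (u, w) ω d) * (∑ t, qbar (t, n) d * a (t, n) ω d)) ∉
        (fun s => s * ∑ d, kbar (u, n) d * qbar (u, n) d) '' Set.Icc (1 - α) (1 + α)} ≤
      ENNReal.ofReal (∑ t : Fin M, Real.sqrt
        (∑ w ∈ Finset.univ.filter (fun w : Fin N => ((u, w) : Fin M × Fin N) ≠ (t, n)),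
          1 / Xi D α (∑ d, kbar (u, n) d * qbar (u, n) d) (kbar (u, w)) (qbar (t, n)))) := by
  classical
  set c : ℝ := ∑ d, kbar (u, n) d * qbar (u, n) d with hcdef
  have hcabs : 0 < |c| := abs_pos.mpr hsig
  set ε : ℝ := α * |c| with hεdef
  have hεpos : 0 < ε := mul_pos hα hcabs
  -- basic facts about the signs
  have habs1 : ∀ (p : Fin M × Fin N) (ω : Ω) (d : Fin D), |a p ω d| ≤ 1 := fun p ω d => by
    rcases haval p ω d with h | h <;> simp [h]
  have hsq1 : ∀ (p : Fin M × Fin N) (ω : Ω) (d : Fin D), a p ω d * a p ω d = 1 :=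
    fun p ω d => by rcases haval p ω d with h | h <;> simp [h]
  have habsmul : ∀ (p q : Fin M × Fin N) (ω : Ω) (d e : Fin D),
      |a p ω d * a q ω e| ≤ 1 := fun p q ω d e => by
    rcases haval p ω d with h | h <;> rcases haval q ω e with h' | h' <;> simp [h, h']
  have hmean : ∀ (p : Fin M × Fin N) (d : Fin D), ∫ ω, a p ω d ∂μ = 0 :=
    fun p d => my_rademacher_mean _ (hameas p d) (hadist p d)
  have haint : ∀ (p : Fin M × Fin N) (d : Fin D), Integrable (fun ω => a p ω d) μ :=
    fun p d => my_integrable_of_abs_le (hameas p d) (fun ω => habs1 p ω d)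
  have hmeas' : ∀ i : (Fin M × Fin N) × Fin D,
      Measurable ((fun p : (Fin M × Fin N) × Fin D => fun ω => a p.1 ω p.2) i) :=
    fun i => hameas i.1 i.2
  have hintmul : ∀ (p q : Fin M × Fin N) (d e : Fin D),
      Integrable (fun ω => a p ω d * a q ω e) μ := fun p q d e =>
    my_integrable_of_abs_le ((hameas p d).mul (hameas q e)) (fun ω => habsmul p q ω d e)
  -- zero mean of products over distinct indices
  have hpair : ∀ (p q : Fin M × Fin N) (d e : Fin D),
      ((p, d) : (Fin M × Fin N) × Fin D) ≠ (q, e) →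
      ∫ ω, a p ω d * a q ω e ∂μ = 0 := by
    intro p q d e hne
    have hIF : IndepFun (fun ω => a p ω d) (fun ω => a q ω e) μ := hindep.indepFun hne
    have h := hIF.integral_mul_eq_mul_integral (haint p d).aestronglyMeasurable (haint q e).aestronglyMeasurable
    have h2 : ∫ ω, a p ω d * a q ω e ∂μ =
        (∫ ω, a p ω d ∂μ) * ∫ ω, a q ω e ∂μ := h
    rw [h2, hmean p d, zero_mul]
  -- zero covariance of the cross products
  have hXzero : ∀ (t : Fin M) (w w' : Fin N) (d d' : Fin D),
      ((u, w) : Fin M × Fin N) ≠ (t, n) → ((u, w') : Fin M × Fin N) ≠ (t, n) →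
      ((w, d) : Fin N × Fin D) ≠ (w', d') →
      ∫ ω, (a (u, w) ω d * a (t, n) ω d) * (a (u, w') ω d' * a (t, n) ω d') ∂μ = 0 := by
    intro t w w' d d' hw hw' hne
    by_cases hdd : d = d'
    · subst hdd
      have hww : w ≠ w' := fun h => hne (by rw [h])
      have hpt : ∀ ω, (a (u, w) ω d * a (t, n) ω d) * (a (u, w') ω d * a (t, n) ω d)
          = a (u, w) ω d * a (u, w') ω d := by
        intro ω
        have h2 := hsq1 (t, n) ω d
        calc (a (u, w) ω d * a (t, n) ω d) * (a (u, w') ω d * a (t, n) ω d)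
            = (a (u, w) ω d * a (u, w') ω d) * (a (t, n) ω d * a (t, n) ω d) := by ring
          _ = a (u, w) ω d * a (u, w') ω d := by rw [h2, mul_one]
      have h13 : ((u, w), d) ≠ (((u, w'), d) : (Fin M × Fin N) × Fin D) := by
        intro h
        exact hww (congrArg (fun x : (Fin M × Fin N) × Fin D => x.1.2) h)
      exact (integral_congr_ae (ae_of_all _ hpt)).trans (hpair (u, w) (u, w') d d h13)
    · have h12 : (((u, w), d) : (Fin M × Fin N) × Fin D) ≠ ((t, n), d) :=
        fun h => hw (congrArg Prod.fst h)
      have h34 : (((u, w'), d') : (Fin M × Fin N) × Fin D) ≠ ((t, n), d') :=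
        fun h => hw' (congrArg Prod.fst h)
      have hIF : IndepFun ((fun ω => a (u, w) ω d) * (fun ω => a (t, n) ω d))
          ((fun ω => a (u, w') ω d') * (fun ω => a (t, n) ω d')) μ :=
        hindep.indepFun_mul_mul hmeas' ((u, w), d) ((t, n), d) ((u, w'), d') ((t, n), d')
          (fun h => hdd (congrArg Prod.snd h)) (fun h => hdd (congrArg Prod.snd h))
          (fun h => hdd (congrArg Prod.snd h)) (fun h => hdd (congrArg Prod.snd h))
      have key : ∫ ω, (a (u, w) ω d * a (t, n) ω d) * (a (u, w') ω d' * a (t, n) ω d') ∂μ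
          = (∫ ω, a (u, w) ω d * a (t, n) ω d ∂μ) *
            ∫ ω, a (u, w') ω d' * a (t, n) ω d' ∂μ :=
        hIF.integral_mul_eq_mul_integral (hintmul (u, w) (t, n) d d).aestronglyMeasurable (hintmul (u, w') (t, n) d' d').aestronglyMeasurable
      rw [key, hpair (u, w) (t, n) d d h12, zero_mul]
  -- the noise pieces
  set F : Fin M → Finset (Fin N) :=
    fun t => Finset.univ.filter (fun w : Fin N => ((u, w) : Fin M × Fin N) ≠ (t, n)) with hFdef
  set Y : Fin M → Ω → ℝ := fun t ω => ∑ w ∈ F t, ∑ d,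
    kbar (u, w) d * qbar (t, n) d * (a (u, w) ω d * a (t, n) ω d) with hYdef
  have hYmeas : ∀ t, Measurable (Y t) := by
    intro t
    apply Finset.measurable_sum
    intro w _
    apply Finset.measurable_sum
    intro d _
    exact ((hameas (u, w) d).mul (hameas (t, n) d)).const_mul _
  have hYabsle : ∀ t ω, |Y t ω| ≤ ∑ w ∈ F t, ∑ d, |kbar (u, w) d * qbar (t, n) d| := by
    intro t ω
    refine (Finset.abs_sum_le_sum_abs _ _).trans (Finset.sum_le_sum fun w _ =>
      (Finset.abs_sum_le_sum_abs _ _).trans (Finset.sum_le_sum fun d _ => ?_))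
    rw [abs_mul]
    calc |kbar (u, w) d * qbar (t, n) d| * |a (u, w) ω d * a (t, n) ω d|
        ≤ |kbar (u, w) d * qbar (t, n) d| * 1 :=
          mul_le_mul_of_nonneg_left (habsmul _ _ ω _ _) (abs_nonneg _)
      _ = |kbar (u, w) d * qbar (t, n) d| := mul_one _
  have hYint : ∀ t, Integrable (Y t) μ :=
    fun t => my_integrable_of_abs_le (hYmeas t) (hYabsle t)
  -- second moment of each noise piece
  have hsecond : ∀ t : Fin M, ∫ ω, (Y t ω) ^ 2 ∂μ =
      ∑ w ∈ F t, ∑ d, (kbar (u, w) d) ^ 2 * (qbar (t, n) d) ^ 2 := by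
    intro t
    set E : Finset (Fin N × Fin D) := (F t) ×ˢ Finset.univ with hEdef
    set coef : Fin N × Fin D → ℝ := fun p => kbar (u, p.1) p.2 * qbar (t, n) p.2 with hcoefdef
    set X : Fin N × Fin D → Ω → ℝ :=
      fun p ω => a (u, p.1) ω p.2 * a (t, n) ω p.2 with hXdef
    have hwmem : ∀ p ∈ E, ((u, p.1) : Fin M × Fin N) ≠ (t, n) := by
      intro p hp
      have := (Finset.mem_product.mp hp).1
      rw [hFdef] at this
      exact (Finset.mem_filter.mp this).2
    have hYE : ∀ ω, Y t ω = ∑ p ∈ E, coef p * X p ω := by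
      intro ω
      rw [hEdef, Finset.sum_product]
    have hexp : ∀ ω, (Y t ω) ^ 2 = ∑ p ∈ E, ∑ q ∈ E,
        (coef p * coef q) * (X p ω * X q ω) := by
      intro ω
      rw [hYE ω, sq, Finset.sum_mul_sum]
      exact Finset.sum_congr rfl fun p _ => Finset.sum_congr rfl fun q _ => by ring
    have hXint : ∀ p q : Fin N × Fin D,
        Integrable (fun ω => (coef p * coef q) * (X p ω * X q ω)) μ := by
      intro p q
      apply Integrable.const_mul
      apply my_integrable_of_abs_le
      · exact ((hameas _ _).mul (hameas _ _)).mul ((hameas _ _).mul (hameas _ _))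
      · intro ω
        rw [abs_mul]
        calc |X p ω| * |X q ω| ≤ 1 * 1 :=
              mul_le_mul (habsmul _ _ ω _ _) (habsmul _ _ ω _ _) (abs_nonneg _) zero_le_one
          _ = 1 := one_mul 1
    have step1 : ∫ ω, (Y t ω) ^ 2 ∂μ = ∑ p ∈ E, ∑ q ∈ E,
        (coef p * coef q) * ∫ ω, X p ω * X q ω ∂μ := by
      rw [integral_congr_ae (ae_of_all _ hexp)]
      rw [integral_finset_sum E fun p _ => integrable_finset_sum E fun q _ => hXint p q]
      refine Finset.sum_congr rfl fun p _ => ?_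
      rw [integral_finset_sum E fun q _ => hXint p q]
      exact Finset.sum_congr rfl fun q _ => integral_const_mul _ _
    have hdiag : ∀ p : Fin N × Fin D, ∫ ω, X p ω * X p ω ∂μ = 1 := by
      intro p
      have hpt : ∀ ω, X p ω * X p ω = 1 := by
        intro ω
        have h1 := hsq1 (u, p.1) ω p.2
        have h2 := hsq1 (t, n) ω p.2
        calc X p ω * X p ω
            = (a (u, p.1) ω p.2 * a (u, p.1) ω p.2) * (a (t, n) ω p.2 * a (t, n) ω p.2) := by
              rw [hXdef]; ring
          _ = 1 := by rw [h1, h2, mul_one]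
      rw [integral_congr_ae (ae_of_all _ hpt)]
      simp
    have step2 : ∀ p ∈ E, ∑ q ∈ E, (coef p * coef q) * ∫ ω, X p ω * X q ω ∂μ
        = coef p ^ 2 := by
      intro p hp
      rw [Finset.sum_eq_single_of_mem p hp]
      · rw [hdiag p]; ring
      · intro q hq hqp
        have hne : ((p.1, p.2) : Fin N × Fin D) ≠ (q.1, q.2) := by
          simpa using hqp.symm
        rw [hXzero t p.1 q.1 p.2 q.2 (hwmem p hp) (hwmem q hq) hne, mul_zero]
    rw [step1, Finset.sum_congr rfl step2, hEdef, Finset.sum_product]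
    exact Finset.sum_congr rfl fun w _ => Finset.sum_congr rfl fun d _ => by
      rw [hcoefdef]; ring
  -- the total noise
  set T : Ω → ℝ := fun ω => ∑ t, Y t ω with hTdef
  have hTmeas : Measurable T := Finset.measurable_sum _ fun t _ => hYmeas t
  have hTabsle : ∀ ω, |T ω| ≤ ∑ t, ∑ w ∈ F t, ∑ d, |kbar (u, w) d * qbar (t, n) d| :=
    fun ω => (Finset.abs_sum_le_sum_abs _ _).trans
      (Finset.sum_le_sum fun t _ => hYabsle t ω)
  have hTint : Integrable T μ := my_integrable_of_abs_le hTmeas hTabsle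
  -- decomposition: S - c = T
  have hdec : ∀ ω, (∑ d, (∑ w, kbar (u, w) d * a (u, w) ω d) *
      (∑ t, qbar (t, n) d * a (t, n) ω d)) - c = T ω := by
    intro ω
    have e1 : (∑ d, (∑ w, kbar (u, w) d * a (u, w) ω d) *
        (∑ t, qbar (t, n) d * a (t, n) ω d)) =
        ∑ t, ∑ w, ∑ d, kbar (u, w) d * qbar (t, n) d * (a (u, w) ω d * a (t, n) ω d) := by
      calc (∑ d, (∑ w, kbar (u, w) d * a (u, w) ω d) * (∑ t, qbar (t, n) d * a (t, n) ω d))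
          = ∑ d, ∑ w, ∑ t, (kbar (u, w) d * a (u, w) ω d) * (qbar (t, n) d * a (t, n) ω d) :=
            Finset.sum_congr rfl fun d _ => Finset.sum_mul_sum _ _ _ _
        _ = ∑ w, ∑ d, ∑ t, (kbar (u, w) d * a (u, w) ω d) * (qbar (t, n) d * a (t, n) ω d) :=
            Finset.sum_comm
        _ = ∑ w, ∑ t, ∑ d, (kbar (u, w) d * a (u, w) ω d) * (qbar (t, n) d * a (t, n) ω d) :=
            Finset.sum_congr rfl fun w _ => Finset.sum_comm
        _ = ∑ t, ∑ w, ∑ d, (kbar (u, w) d * a (u, w) ω d) * (qbar (t, n) d * a (t, n) ω d) :=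
            Finset.sum_comm
        _ = ∑ t, ∑ w, ∑ d, kbar (u, w) d * qbar (t, n) d * (a (u, w) ω d * a (t, n) ω d) :=
            Finset.sum_congr rfl fun t _ => Finset.sum_congr rfl fun w _ =>
              Finset.sum_congr rfl fun d _ => by ring
    have e2 : ∀ t : Fin M, (∑ w, ∑ d, kbar (u, w) d * qbar (t, n) d *
        (a (u, w) ω d * a (t, n) ω d)) =
        (∑ w ∈ F t, ∑ d, kbar (u, w) d * qbar (t, n) d * (a (u, w) ω d * a (t, n) ω d)) +
        (if t = u then c else 0) := by
      intro t
      rw [← Finset.sum_filter_add_sum_filter_not Finset.univ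
        (fun w : Fin N => ((u, w) : Fin M × Fin N) ≠ (t, n))]
      congr 1
      by_cases htu : t = u
      · have hfil : Finset.univ.filter
            (fun w : Fin N => ¬((u, w) : Fin M × Fin N) ≠ (t, n)) = {n} := by
          ext w
          simp [Prod.ext_iff, htu]
        rw [hfil, Finset.sum_singleton, if_pos htu, hcdef, htu]
        refine Finset.sum_congr rfl fun d _ => ?_
        rw [hsq1 (u, n) ω d, mul_one]
      · have hfil : Finset.univ.filter
            (fun w : Fin N => ¬((u, w) : Fin M × Fin N) ≠ (t, n)) = ∅ := by
          ext w
          simp only [Finset.mem_filter, Finset.mem_univ, true_and, not_not,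
            Finset.notMem_empty, iff_false, Prod.ext_iff, not_and]
          intro h1
          exact absurd h1.symm htu
        rw [hfil, if_neg htu, Finset.sum_empty]
    rw [e1, Finset.sum_congr rfl fun t _ => e2 t, Finset.sum_add_distrib]
    simp [hTdef, hYdef]
  -- event inclusion
  have hsub : {ω | (∑ d, (∑ w, kbar (u, w) d * a (u, w) ω d) *
      (∑ t, qbar (t, n) d * a (t, n) ω d)) ∉
      (fun s => s * c) '' Set.Icc (1 - α) (1 + α)} ⊆ {ω | ε ≤ |T ω|} := by
    intro ω hω
    simp only [Set.mem_setOf_eq] at hω ⊢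
    by_contra hlt
    push_neg at hlt
    apply hω
    set S : ℝ := ∑ d, (∑ w, kbar (u, w) d * a (u, w) ω d) *
      (∑ t, qbar (t, n) d * a (t, n) ω d) with hSdef
    have habsS : |S - c| ≤ α * |c| := by
      rw [hdec ω]
      exact le_of_lt hlt
    refine ⟨S / c, ?_, div_mul_cancel₀ _ hsig⟩
    have h1 : |S / c - 1| ≤ α := by
      have hrw : S / c - 1 = (S - c) / c := by field_simp
      rw [hrw, abs_div, div_le_iff₀ hcabs]
      exact habsS
    rcases abs_le.mp h1 with ⟨hl, hr⟩
    exact Set.mem_Icc.mpr ⟨by linarith, by linarith⟩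
  -- Markov's inequality
  have markov := mul_meas_ge_le_integral_of_nonneg
    (ae_of_all μ fun ω => abs_nonneg (T ω)) hTint.abs ε
  have h2 : (μ {ω | ε ≤ |T ω|}).toReal ≤ (∫ ω, |T ω| ∂μ) / ε := by
    rw [le_div_iff₀ hεpos]
    have hm : ε * (μ {ω | ε ≤ |T ω|}).toReal ≤ ∫ ω, |T ω| ∂μ := markov
    linarith [hm]
  -- the L¹ bound
  have hT1 : ∫ ω, |T ω| ∂μ ≤ ∑ t, Real.sqrt
      (∑ w ∈ F t, ∑ d, (kbar (u, w) d) ^ 2 * (qbar (t, n) d) ^ 2) := by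
    calc ∫ ω, |T ω| ∂μ ≤ ∫ ω, ∑ t, |Y t ω| ∂μ := by
          refine integral_mono hTint.abs (integrable_finset_sum _ fun t _ => (hYint t).abs) ?_
          intro ω
          exact Finset.abs_sum_le_sum_abs _ _
      _ = ∑ t, ∫ ω, |Y t ω| ∂μ := integral_finset_sum _ fun t _ => (hYint t).abs
      _ ≤ ∑ t, Real.sqrt (∑ w ∈ F t, ∑ d, (kbar (u, w) d) ^ 2 * (qbar (t, n) d) ^ 2) := by
          refine Finset.sum_le_sum fun t _ => ?_
          exact (my_abs_integral_le_sqrt (hYmeas t) (hYabsle t)).trans_eq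
            (congrArg Real.sqrt (hsecond t))
  -- relate to Xi
  have hXi : ∀ t : Fin M, (∑ w ∈ F t,
      1 / Xi D α c (kbar (u, w)) (qbar (t, n))) =
      (∑ w ∈ F t, ∑ d, (kbar (u, w) d) ^ 2 * (qbar (t, n) d) ^ 2) / (α ^ 2 * c ^ 2) := by
    intro t
    rw [Finset.sum_div]
    refine Finset.sum_congr rfl fun w _ => ?_
    rw [Xi, one_div, inv_div]
  have hsqrtXi : ∀ t : Fin M, Real.sqrt (∑ w ∈ F t,
      1 / Xi D α c (kbar (u, w)) (qbar (t, n))) =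
      Real.sqrt (∑ w ∈ F t, ∑ d, (kbar (u, w) d) ^ 2 * (qbar (t, n) d) ^ 2) / ε := by
    intro t
    rw [hXi t]
    have hnn : 0 ≤ ∑ w ∈ F t, ∑ d, (kbar (u, w) d) ^ 2 * (qbar (t, n) d) ^ 2 :=
      Finset.sum_nonneg fun w _ => Finset.sum_nonneg fun d _ =>
        mul_nonneg (sq_nonneg _) (sq_nonneg _)
    rw [Real.sqrt_div hnn]
    congr 1
    rw [hεdef]
    rw [Real.sqrt_mul (sq_nonneg α), Real.sqrt_sq hα.le, Real.sqrt_sq_eq_abs]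
  have h3 : (∫ ω, |T ω| ∂μ) / ε ≤ ∑ t : Fin M, Real.sqrt (∑ w ∈ F t,
      1 / Xi D α c (kbar (u, w)) (qbar (t, n))) := by
    calc (∫ ω, |T ω| ∂μ) / ε
        ≤ (∑ t, Real.sqrt (∑ w ∈ F t, ∑ d,
            (kbar (u, w) d) ^ 2 * (qbar (t, n) d) ^ 2)) / ε := by
          gcongr
      _ = ∑ t : Fin M, Real.sqrt (∑ w ∈ F t, ∑ d,
            (kbar (u, w) d) ^ 2 * (qbar (t, n) d) ^ 2) / ε := Finset.sum_div _ _ _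
      _ = ∑ t : Fin M, Real.sqrt (∑ w ∈ F t,
            1 / Xi D α c (kbar (u, w)) (qbar (t, n))) := by
          exact (Finset.sum_congr rfl fun t _ => (hsqrtXi t).symm)
  calc μ {ω | (∑ d, (∑ w, kbar (u, w) d * a (u, w) ω d) *
        (∑ t, qbar (t, n) d * a (t, n) ω d)) ∉
        (fun s => s * c) '' Set.Icc (1 - α) (1 + α)}
      ≤ μ {ω | ε ≤ |T ω|} := measure_mono hsub
    _ = ENNReal.ofReal ((μ {ω | ε ≤ |T ω|}).toReal) :=
        (ENNReal.ofReal_toReal (measure_ne_top _ _)).symm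
    _ ≤ ENNReal.ofReal (∑ t : Fin M, Real.sqrt (∑ w ∈ F t,
          1 / Xi D α c (kbar (u, w)) (qbar (t, n)))) :=
        ENNReal.ofReal_le_ofReal (h2.trans h3)
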